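/- arXiv:1911.04262 — 3 statements merged into one kernel-verified Lean document; each statement's English description precedes it below -/
import Mathlib

section
/- In a compact Hausdorff topological ring R, the closure of the upper nilradical N(R) (the sum of all two-sided nil ideals) is contained in the Jacobson radical J(R). -/
/-- An additive subgroup is a two-sided nil ideal if it is closed under left and right
multiplication by ring elements and every element is nilpotent. -/
def IsTwoSidedNilIdeal {R : Type*} [Ring R] (I : AddSubgroup R) : Prop :=
  (∀ r x : R, x ∈ I → r * x ∈ I ∧ x * r ∈ I) ∧ ∀ x ∈ I, IsNilpotent x

/-- The upper nilradical: the sum of all two-sided nil ideals. -/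
def upperNilradical (R : Type*) [Ring R] : AddSubgroup R :=
  ⨆ I ∈ {I : AddSubgroup R | IsTwoSidedNilIdeal I}, I

/-!
The closure `C` of the upper nilradical `N` is a closed left ideal. If `e ∈ C` is idempotent,
then for `a ∈ N` the element `a * e` is nilpotent, so `e * (1 - a * e)` right-divides `e`.
Compactness makes the set of right divisors of `e` closed; letting `a → e` shows that
`e * (1 - e * e) = 0` right-divides `e`, so `e = 0`. For `y ∈ C`, the closure of
`{y ^ (n + 1)}` is a compact semigroup inside `C`, so it contains an idempotent, which must be
`0`. Passing to the limit in `(∑ i < n, y ^ i) * (1 - y) + y ^ n = 1` along powers `y ^ n → 0`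
then shows that `1 - y` has a left inverse, i.e. `y` is left quasi-regular, which places `C`
inside the Jacobson radical.
-/

open Set Topology

section NilIdeal

variable {R : Type*} [Ring R]

lemma isTwoSidedNilIdeal_bot : IsTwoSidedNilIdeal (⊥ : AddSubgroup R) := by
  refine ⟨fun r x hx => ?_, fun x hx => ?_⟩ <;> rw [AddSubgroup.mem_bot] at hx <;> simp [hx]

lemma IsTwoSidedNilIdeal.sup {I J : AddSubgroup R} (hI : IsTwoSidedNilIdeal I)
    (hJ : IsTwoSidedNilIdeal J) : IsTwoSidedNilIdeal (I ⊔ J) := by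
  refine ⟨?_, ?_⟩
  · rintro r x hx
    obtain ⟨a, ha, b, hb, rfl⟩ := AddSubgroup.mem_sup.mp hx
    exact ⟨AddSubgroup.mem_sup.mpr
        ⟨r * a, (hI.1 r a ha).1, r * b, (hJ.1 r b hb).1, (mul_add r a b).symm⟩,
      AddSubgroup.mem_sup.mpr
        ⟨a * r, (hI.1 r a ha).2, b * r, (hJ.1 r b hb).2, (add_mul a b r).symm⟩⟩
  · rintro x hx
    obtain ⟨a, ha, b, hb, rfl⟩ := AddSubgroup.mem_sup.mp hx
    have pow_sub_pow_mem : ∀ m : ℕ, (a + b) ^ m - b ^ m ∈ I := by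
      intro m
      induction m with
      | zero => simp
      | succ m ih =>
        have h : (a + b) ^ (m + 1) - b ^ (m + 1) =
            ((a + b) ^ m - b ^ m) * (a + b) + b ^ m * a := by
          rw [pow_succ, pow_succ]; noncomm_ring
        rw [h]
        exact I.add_mem (hI.1 (a + b) _ ih).2 (hI.1 (b ^ m) a ha).1
    obtain ⟨n, hn⟩ := hJ.2 b hb
    obtain ⟨m, hm⟩ := hI.2 _ (by simpa [hn] using pow_sub_pow_mem n)
    exact ⟨n * m, by rw [pow_mul, hm]⟩

lemma isTwoSidedNilIdeal_upperNilradical : IsTwoSidedNilIdeal (upperNilradical R) := by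
  have mem_iff : ∀ x, x ∈ upperNilradical R ↔ ∃ I, IsTwoSidedNilIdeal I ∧ x ∈ I :=
    fun x => AddSubgroup.mem_biSup_of_directedOn (p := fun I => I ∈ {I | IsTwoSidedNilIdeal I})
      isTwoSidedNilIdeal_bot fun I hI J hJ => ⟨I ⊔ J, hI.sup hJ, le_sup_left, le_sup_right⟩
  have le : ∀ I, IsTwoSidedNilIdeal I → I ≤ upperNilradical R := fun I hI x hx =>
    (mem_iff x).mpr ⟨I, hI, hx⟩
  refine ⟨fun r x hx => ?_, fun x hx => ?_⟩ <;> obtain ⟨I, hI, hxI⟩ := (mem_iff x).mp hx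
  · exact ⟨le I hI (hI.1 r x hxI).1, le I hI (hI.1 r x hxI).2⟩
  · exact hI.2 x hxI

end NilIdeal

lemma isClosed_setOf_exists_eq {X Y Z : Type*} [TopologicalSpace X] [TopologicalSpace Y]
    [TopologicalSpace Z] [CompactSpace Y] [T1Space Z] {φ : X → Y → Z}
    (hφ : Continuous (Function.uncurry φ)) (c : Z) : IsClosed {x | ∃ y, φ x y = c} := by
  convert isClosedMap_fst_of_compactSpace _ ((isClosed_singleton (x := c)).preimage hφ) using 1
  ext x
  simp

lemma exists_isIdempotentElem_mem_closure_range_pow_succ {M : Type*} [Monoid M]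
    [TopologicalSpace M] [ContinuousMul M] [CompactSpace M] [T2Space M] (y : M) :
    ∃ e ∈ closure (range fun n : ℕ => y ^ (n + 1)), IsIdempotentElem e := by
  refine exists_idempotent_in_compact_subsemigroup continuous_mul_const _
    ⟨y ^ 1, subset_closure ⟨0, rfl⟩⟩ isClosed_closure.isCompact fun a ha b hb => ?_
  refine map_mem_closure₂ continuous_mul ha hb ?_
  rintro _ ⟨n, rfl⟩ _ ⟨k, rfl⟩
  exact ⟨n + k + 1, by rw [← pow_add]; ring_nf⟩

section TopologicalRing

variable {R : Type*} [Ring R] [TopologicalSpace R]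

lemma mul_mem_closure_upperNilradical [ContinuousMul R] (r : R) {x : R}
    (hx : x ∈ closure (upperNilradical R : Set R)) :
    r * x ∈ closure (upperNilradical R : Set R) :=
  map_mem_closure (continuous_const_mul r) hx fun _ ha =>
    (isTwoSidedNilIdeal_upperNilradical.1 r _ ha).1

variable [IsTopologicalRing R] [CompactSpace R]

lemma IsIdempotentElem.eq_zero_of_mem_closure_upperNilradical [T1Space R] {e : R}
    (he : IsIdempotentElem e) (heN : e ∈ closure (upperNilradical R : Set R)) : e = 0 := by
  have right_dvd_e : ∀ a ∈ (upperNilradical R : Set R), ∃ w, e * (1 - a * e) * w = e := by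
    intro a ha
    have hnil : IsNilpotent (a * e) := isTwoSidedNilIdeal_upperNilradical.2 _
      (isTwoSidedNilIdeal_upperNilradical.1 e a ha).2
    obtain ⟨w, hw⟩ := hnil.isUnit_one_sub.exists_right_inv
    exact ⟨w, by rw [mul_assoc, hw, mul_one]⟩
  obtain ⟨w, hw⟩ :=
    (isClosed_setOf_exists_eq (φ := fun x w : R => x * w) continuous_mul e).closure_subset
      (map_mem_closure (by fun_prop) heN right_dvd_e)
  rwa [he.eq, mul_sub, mul_one, he.eq, sub_self, zero_mul, eq_comm] at hw

lemma exists_mul_one_sub_eq_one_of_zero_mem_closure_range_pow [T1Space R] {y : R}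
    (hy : (0 : R) ∈ closure (range (y ^ · : ℕ → R))) : ∃ s, s * (1 - y) = 1 := by
  have hclosed := isClosed_setOf_exists_eq (φ := fun x s : R => s * (1 - y) + x) (by fun_prop) 1
  have pow_mem : range (y ^ · : ℕ → R) ⊆ {x | ∃ s, s * (1 - y) + x = 1} := by
    rintro _ ⟨n, rfl⟩
    exact ⟨∑ i ∈ Finset.range n, y ^ i, by rw [geom_sum_mul_neg, sub_add_cancel]⟩
  obtain ⟨s, hs⟩ := hclosed.closure_subset_iff.mpr pow_mem hy
  exact ⟨s, by rwa [add_zero] at hs⟩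

lemma exists_mul_one_sub_eq_one_of_mem_closure_upperNilradical [T2Space R] {y : R}
    (hy : y ∈ closure (upperNilradical R : Set R)) : ∃ s, s * (1 - y) = 1 := by
  refine exists_mul_one_sub_eq_one_of_zero_mem_closure_range_pow ?_
  obtain ⟨e, he_pow, he⟩ := exists_isIdempotentElem_mem_closure_range_pow_succ y
  have pow_mem : (range fun n : ℕ => y ^ (n + 1)) ⊆ closure (upperNilradical R : Set R) := by
    rintro _ ⟨n, rfl⟩
    simpa only [pow_succ] using mul_mem_closure_upperNilradical (y ^ n) hy
  have he_zero := he.eq_zero_of_mem_closure_upperNilradical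
    (closure_minimal pow_mem isClosed_closure he_pow)
  rw [← he_zero]
  exact closure_mono (range_comp_subset_range (· + 1) (y ^ ·)) he_pow

end TopologicalRing

/-- In a compact Hausdorff topological ring, the closure of the upper nilradical is
contained in the Jacobson radical (the intersection of all maximal left ideals). -/
theorem closure_upperNilradical_subset_jacobson (R : Type*) [Ring R] [TopologicalSpace R]
    [IsTopologicalRing R] [CompactSpace R] [T2Space R] :
    closure (upperNilradical R : Set R) ⊆ (Ideal.jacobson (⊥ : Ideal R) : Set R) := by
  intro x hx
  refine Ideal.mem_jacobson_iff.mpr fun y => ?_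
  obtain ⟨s, hs⟩ := exists_mul_one_sub_eq_one_of_mem_closure_upperNilradical
    (mul_mem_closure_upperNilradical (-y) hx)
  refine ⟨s, ?_⟩
  rw [Ideal.mem_bot, ← hs]
  noncomm_ring
end

section
/- Let S be a semisimple (Jacobson radical zero) compact Hausdorff topological ring that is nonzero. Then S is unital. -/
/-!
Order the idempotents by `e ≤ f ↔ f * e = e ∧ e * f = e`. Compactness bounds every chain by a
cluster point, so by Zorn there is a maximal idempotent `ε`. Every element of the corner
`(1 - ε) S (1 - ε)` is left quasi-regular: otherwise the closure of its powers in the circle monoid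
`x ∘ y = y + x + x * y` of this compact corner contains an idempotent `f ≠ 0`, and `-f` is a ring
idempotent orthogonal to `ε`, so `ε - f` contradicts maximality. Swapping factors of quasi-regular
products moves this to the one-sided annihilators of `ε`, which contain `x - ε * x` and `x - x * ε`;
semisimplicity then makes `ε` a two-sided identity.
-/

/-- An element `x` of a non-unital ring is left quasi-regular if there is `y` with
`y + x + y * x = 0`. -/
def IsLeftQuasiRegular {S : Type*} [NonUnitalRing S] (x : S) : Prop :=
  ∃ y : S, y + x + y * x = 0

open Set

theorem exists_isIdempotentElem_ne_one_of_forall_mul_ne_one {M : Type*} [Monoid M]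
    [TopologicalSpace M] [ContinuousMul M] [T2Space M] {T : Set M} (hT : IsCompact T)
    (hmul : ∀ x ∈ T, ∀ y ∈ T, x * y ∈ T) {a : M} (haT : a ∈ T) (ha : ∀ y, y * a ≠ 1) :
    ∃ e ∈ T, IsIdempotentElem e ∧ e ≠ 1 := by
  set P := closure (range fun n : ℕ => a ^ (n + 1))
  have hPT : P ⊆ T := closure_minimal (by
    rintro _ ⟨n, rfl⟩
    induction n with
    | zero => simpa using haT
    | succ n ih => simpa [pow_succ _ (n + 1)] using hmul _ ih _ haT) hT.isClosed
  have hPc : IsCompact P := hT.of_isClosed_subset isClosed_closure hPT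
  have hPmul : ∀ x ∈ P, ∀ y ∈ P, x * y ∈ P := fun x hx y hy => by
    refine map_mem_closure₂ (u := range fun n : ℕ => a ^ (n + 1)) continuous_mul hx hy ?_
    rintro _ ⟨m, rfl⟩ _ ⟨n, rfl⟩
    exact ⟨m + n + 1, by dsimp only; rw [← pow_add]; congr 1; omega⟩
  obtain ⟨e, heP, he⟩ := exists_idempotent_in_compact_subsemigroup continuous_mul_const P
    ⟨a, subset_closure ⟨0, pow_one a⟩⟩ hPc hPmul
  refine ⟨e, hPT heP, he, ?_⟩
  rintro rfl
  -- the powers `a ^ (n + 2)` lie in the compact set `P * a`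
  have hP : P ⊆ (· * a) '' P ∪ {a} := by
    refine closure_minimal ?_
      ((hPc.image (continuous_mul_const a)).isClosed.union isClosed_singleton)
    rintro _ ⟨_ | n, rfl⟩
    · exact Or.inr (pow_one a)
    · exact Or.inl ⟨a ^ (n + 1), subset_closure ⟨n, rfl⟩, (pow_succ _ _).symm⟩
  rcases hP heP with ⟨y, -, hy⟩ | h
  · exact ha y hy
  · exact ha 1 (by rw [one_mul, ← h])

namespace PreQuasiregular

variable {R : Type*} [TopologicalSpace R]

instance : TopologicalSpace (PreQuasiregular R) := .induced val ‹_›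

@[fun_prop]
theorem continuous_val : Continuous (val : PreQuasiregular R → R) := continuous_induced_dom

def homeomorph [NonUnitalSemiring R] : R ≃ₜ PreQuasiregular R where
  toEquiv := equiv
  continuous_toFun := continuous_induced_rng.2 continuous_id
  continuous_invFun := continuous_val

instance [NonUnitalSemiring R] [T2Space R] : T2Space (PreQuasiregular R) :=
  homeomorph.symm.isEmbedding.t2Space

instance [NonUnitalSemiring R] [IsTopologicalSemiring R] : ContinuousMul (PreQuasiregular R) :=
  ⟨continuous_induced_rng.2 <| by simp only [Function.comp_def, val_mul]; fun_prop⟩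

end PreQuasiregular

section NonUnitalRing

variable {S : Type*} [NonUnitalRing S]

theorem isLeftQuasiRegular_mul_comm {u v : S} :
    IsLeftQuasiRegular (u * v) ↔ IsLeftQuasiRegular (v * u) := by
  have swap : ∀ u v : S, IsLeftQuasiRegular (u * v) → IsLeftQuasiRegular (v * u) := by
    rintro u v ⟨y, hy⟩
    -- `(1 - v u)⁻¹ = 1 + v (1 - u v)⁻¹ u`
    refine ⟨-(v * u) - v * y * u, ?_⟩
    calc -(v * u) - v * y * u + v * u + (-(v * u) - v * y * u) * (v * u)
        = -(v * (y + u * v + y * (u * v)) * u) := by noncomm_ring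
      _ = 0 := by rw [hy, mul_zero, zero_mul, neg_zero]
  exact ⟨swap u v, swap v u⟩

theorem isLeftQuasiRegular_iff_exists_mul_eq_one {a : S} :
    IsLeftQuasiRegular a ↔ ∃ y, y * PreQuasiregular.equiv a = 1 := by
  refine ⟨fun ⟨y, hy⟩ => ⟨.equiv y, ?_⟩, fun ⟨y, hy⟩ => ⟨y.val, ?_⟩⟩
  · refine PreQuasiregular.equiv.symm.injective ?_
    simpa [add_comm a] using hy
  · simpa [add_comm a] using congrArg PreQuasiregular.val hy

/-- The corner `(1 - e) S (1 - e)` of the unitization. -/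
def peirceCorner (e : S) : NonUnitalSubring S where
  carrier := {x | e * x = 0 ∧ x * e = 0}
  zero_mem' := by simp
  add_mem' := by rintro x y ⟨hx, hx'⟩ ⟨hy, hy'⟩; simp [mul_add, add_mul, hx, hx', hy, hy']
  neg_mem' := by rintro x ⟨hx, hx'⟩; simp [hx, hx']
  mul_mem' := by
    rintro x y ⟨hx, -⟩ ⟨-, hy'⟩
    exact ⟨by rw [← mul_assoc, hx, zero_mul], by rw [mul_assoc, hy', mul_zero]⟩

theorem mem_peirceCorner {e x : S} : x ∈ peirceCorner e ↔ e * x = 0 ∧ x * e = 0 := Iff.rfl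

theorem isClosed_peirceCorner [TopologicalSpace S] [IsTopologicalRing S] [T2Space S] (e : S) :
    IsClosed (peirceCorner e : Set S) :=
  (isClosed_eq (by fun_prop) continuous_const).inter (isClosed_eq (by fun_prop) continuous_const)

section Annihilators

variable {e z : S}

theorem isLeftQuasiRegular_mul_of_idem_mul_eq_zero (he : IsIdempotentElem e)
    (hC : ∀ c ∈ peirceCorner e, IsLeftQuasiRegular c) (hz : e * z = 0) (r : S) :
    IsLeftQuasiRegular (r * z) := by
  have hc : z * (r - r * e) ∈ peirceCorner e := by
    rw [mem_peirceCorner, ← mul_assoc, hz, zero_mul, mul_assoc, sub_mul, mul_assoc, he.eq,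
      sub_self, mul_zero]
    exact ⟨rfl, rfl⟩
  simpa [sub_mul, mul_assoc, hz] using isLeftQuasiRegular_mul_comm.1 (hC _ hc)

theorem isLeftQuasiRegular_mul_of_mul_idem_eq_zero (he : IsIdempotentElem e)
    (hC : ∀ c ∈ peirceCorner e, IsLeftQuasiRegular c) (hz : z * e = 0) (r : S) :
    IsLeftQuasiRegular (r * z) := by
  have hc : (r - e * r) * z ∈ peirceCorner e := by
    rw [mem_peirceCorner, mul_assoc, hz, mul_zero, ← mul_assoc, mul_sub, ← mul_assoc, he.eq,
      sub_self, zero_mul]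
    exact ⟨rfl, rfl⟩
  have hzr : IsLeftQuasiRegular (z * r) := by
    simpa [mul_sub, ← mul_assoc, hz] using isLeftQuasiRegular_mul_comm.1 (hC _ hc)
  exact isLeftQuasiRegular_mul_comm.1 hzr

end Annihilators

theorem NonUnitalSubring.exists_isIdempotentElem_ne_zero_of_not_isLeftQuasiRegular
    [TopologicalSpace S] [IsTopologicalRing S] [T2Space S] {T : NonUnitalSubring S}
    (hT : IsCompact (T : Set S)) {a : S} (haT : a ∈ T) (ha : ¬ IsLeftQuasiRegular a) :
    ∃ e ∈ T, IsIdempotentElem e ∧ e ≠ 0 := by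
  obtain ⟨f, hfT, hf, hf1⟩ := exists_isIdempotentElem_ne_one_of_forall_mul_ne_one
    (T := PreQuasiregular.val ⁻¹' T) (PreQuasiregular.homeomorph.symm.isCompact_preimage.2 hT)
    (fun x hx y hy => by simpa using add_mem (add_mem hy hx) (mul_mem hx hy)) haT
    (fun y hy => ha (isLeftQuasiRegular_iff_exists_mul_eq_one.2 ⟨y, hy⟩))
  have hff : f.val * f.val = -f.val := by
    have := congrArg PreQuasiregular.val hf.eq
    rw [PreQuasiregular.val_mul] at this
    linear_combination (norm := abel) this
  refine ⟨-f.val, neg_mem hfT, by rw [IsIdempotentElem, neg_mul_neg, hff], ?_⟩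
  rw [neg_ne_zero]
  exact fun h => hf1 (PreQuasiregular.equiv.symm.injective h)

/-- The order on idempotents: `e ≤ f` iff `e ∈ f S f`. -/
def IdemLE (e f : S) : Prop := f * e = e ∧ e * f = e

theorem IdemLE.trans {e f g : S} (hef : IdemLE e f) (hfg : IdemLE f g) : IdemLE e g :=
  ⟨by rw [← hef.1, ← mul_assoc, hfg.1], by rw [← hef.2, mul_assoc, hfg.2]⟩

theorem IsIdempotentElem.idemLE_self {e : S} (he : IsIdempotentElem e) : IdemLE e e := ⟨he, he⟩

theorem isClosed_setOf_idemLE [TopologicalSpace S] [IsTopologicalRing S] [T2Space S] (e : S) :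
    IsClosed {f : S | IdemLE e f} :=
  (isClosed_eq (by fun_prop) continuous_const).inter (isClosed_eq (by fun_prop) continuous_const)

section Compact

variable [TopologicalSpace S] [IsTopologicalRing S] [CompactSpace S] [T2Space S]

theorem exists_upperBound_idemLE_of_isChain {c : Set {e : S // IsIdempotentElem e}}
    (hc : IsChain (fun e f => IdemLE e.1 f.1) c) :
    ∃ f : {e : S // IsIdempotentElem e}, ∀ e ∈ c, IdemLE e.1 f.1 := by
  rcases c.eq_empty_or_nonempty with rfl | ⟨e₀, he₀⟩
  · exact ⟨⟨0, .zero⟩, by simp⟩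
  have : Nonempty c := ⟨⟨e₀, he₀⟩⟩
  let U : c → Set S := fun e => {f | IsIdempotentElem f ∧ IdemLE e.1.1 f}
  have hU : ∀ e, IsClosed (U e) := fun e =>
    (isClosed_eq (by fun_prop) continuous_id).inter (isClosed_setOf_idemLE _)
  have hdir : Directed (· ⊇ ·) U := by
    intro e e'
    rcases eq_or_ne e e' with rfl | hne
    · exact ⟨e, le_rfl, le_rfl⟩
    rcases hc e.2 e'.2 (Subtype.coe_ne_coe.2 hne) with h | h
    · exact ⟨e', fun f hf => ⟨hf.1, h.trans hf.2⟩, le_rfl⟩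
    · exact ⟨e, le_rfl, fun f hf => ⟨hf.1, h.trans hf.2⟩⟩
  obtain ⟨f, hf⟩ := IsCompact.nonempty_iInter_of_directed_nonempty_isCompact_isClosed U hdir
    (fun e => ⟨e.1.1, e.1.2, e.1.2.idemLE_self⟩) (fun e => (hU e).isCompact) hU
  rw [mem_iInter] at hf
  exact ⟨⟨f, (hf ⟨e₀, he₀⟩).1⟩, fun e he => (hf ⟨e, he⟩).2⟩

theorem exists_isIdempotentElem_forall_mem_peirceCorner_eq_zero :
    ∃ ε : S, IsIdempotentElem ε ∧ ∀ g ∈ peirceCorner ε, IsIdempotentElem g → g = 0 := by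
  obtain ⟨⟨ε, hε⟩, hmax⟩ := exists_maximal_of_chains_bounded
    (r := fun e f : {e : S // IsIdempotentElem e} => IdemLE e.1 f.1)
    (fun _ hc => exists_upperBound_idemLE_of_isChain hc) IdemLE.trans
  refine ⟨ε, hε, fun g ⟨hεg, hgε⟩ hg => ?_⟩
  have hsum : IsIdempotentElem (ε + g) := hε.add hg (by rw [hεg, hgε, add_zero])
  have hle : IdemLE ε (ε + g) := ⟨by rw [add_mul, hε.eq, hgε, add_zero],
    by rw [mul_add, hε.eq, hεg, add_zero]⟩
  have := (hmax ⟨ε + g, hsum⟩ hle).1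
  rwa [mul_add, hε.eq, hεg, add_zero, left_eq_add] at this

end Compact

end NonUnitalRing

theorem compact_semisimple_is_unital_general (S : Type*) [NonUnitalRing S] [TopologicalSpace S]
    [IsTopologicalRing S] [CompactSpace S] [T2Space S]
    (hss : ∀ x : S, (∀ r : S, IsLeftQuasiRegular (r * x)) → x = 0) :
    ∃ one : S, ∀ x : S, one * x = x ∧ x * one = x := by
  obtain ⟨ε, hε, hmax⟩ := exists_isIdempotentElem_forall_mem_peirceCorner_eq_zero (S := S)
  have hC : ∀ c ∈ peirceCorner ε, IsLeftQuasiRegular c := fun c hc => by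
    by_contra hc'
    obtain ⟨g, hgC, hg, hg0⟩ :=
      NonUnitalSubring.exists_isIdempotentElem_ne_zero_of_not_isLeftQuasiRegular
        (isClosed_peirceCorner ε).isCompact hc hc'
    exact hg0 (hmax g hgC hg)
  refine ⟨ε, fun x => ⟨?_, ?_⟩⟩
  · have hz : ε * (x - ε * x) = 0 := by rw [mul_sub, ← mul_assoc, hε.eq, sub_self]
    exact (sub_eq_zero.1 (hss _ (isLeftQuasiRegular_mul_of_idem_mul_eq_zero hε hC hz))).symm
  · have hz : (x - x * ε) * ε = 0 := by rw [sub_mul, mul_assoc, hε.eq, sub_self]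
    exact (sub_eq_zero.1 (hss _ (isLeftQuasiRegular_mul_of_mul_idem_eq_zero hε hC hz))).symm

/-- A nonzero compact Hausdorff topological ring with zero Jacobson radical
(no nonzero element `x` with `r * x` left quasi-regular for all `r`) is unital. -/
theorem compact_semisimple_is_unital (S : Type*) [NonUnitalRing S] [TopologicalSpace S]
    [IsTopologicalRing S] [CompactSpace S] [T2Space S]
    (hss : ∀ x : S, (∀ r : S, IsLeftQuasiRegular (r * x)) → x = 0)
    (hne : ∃ x : S, x ≠ 0) :
    ∃ one : S, ∀ x : S, one * x = x ∧ x * one = x :=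
  compact_semisimple_is_unital_general S hss
end

section
/- In a compact Hausdorff topological ring, the Jacobson radical is topologically nilpotent: the powers J(R)^n converge to zero, i.e., for every neighborhood U of 0 there is n with J(R)^n ⊆ U. -/
/-!
Put `K = ⋂ₙ closure (Jⁿ)`. By compactness `K` is a closed multiplicative set with `K ⊆ K * K`,
and it suffices to show `K = {0}`: then the decreasing compact sets `closure (Jⁿ)` eventually lie
in any neighbourhood of `0`. Idempotents of `closure J` vanish, because `1 - x` has a left inverse
for `x ∈ J` and left invertibility is a closed condition. Now factor `x ∈ K` indefinitely on the
right inside `K`; a cluster point `c` of the right factors satisfies `x ∈ K * c` and `c ∈ K * c`,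
say `c = e * c`. The compact semigroup `{f ∈ K | f * c = c}` contains an idempotent, which is `0`,
so `c = 0` and `x = 0`.
-/

open Filter Set Topology Pointwise

theorem IsCompact.exists_rel_self_of_forall_exists_rel {X : Type*} [TopologicalSpace X]
    {K : Set X} (hK : IsCompact K) {r : X → X → Prop} [IsTrans X r]
    (hr : IsClosed {p : X × X | r p.1 p.2}) (hsucc : ∀ x ∈ K, ∃ y ∈ K, r x y)
    {x : X} (hx : x ∈ K) : ∃ c ∈ K, r x c ∧ r c c := by
  choose! f hfK hf using hsucc
  set u : ℕ → X := fun n => f^[n] x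
  have huK : ∀ n, u n ∈ K := fun n => (MapsTo.iterate hfK n) hx
  have hstep : ∀ n, r (u n) (u (n + 1)) := fun n => by
    simp only [u, Function.iterate_succ_apply']
    exact hf _ (huK n)
  obtain ⟨c, hcK, hc⟩ := hK.exists_mapClusterPt (f := atTop) (u := u)
    (tendsto_principal.2 (Eventually.of_forall huK))
  have hrc : ∀ m, r (u m) c := fun m =>
    (hr.preimage (Continuous.prodMk_right (u m))).mem_of_mapClusterPt hc
      ((eventually_gt_atTop m).mono fun _ hn => Nat.rel_of_forall_rel_succ_of_lt r hstep hn)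
  exact ⟨c, hcK, hrc 0,
    (hr.preimage (Continuous.prodMk_left c)).mem_of_mapClusterPt hc (Eventually.of_forall hrc)⟩

section SemigroupWithZero

variable {M : Type*} [SemigroupWithZero M] [TopologicalSpace M] [ContinuousMul M]
  [CompactSpace M] [T2Space M] {K : Set M}

theorem IsClosed.eq_zero_of_mul_eq_self (hK : IsClosed K) (hKK : K * K ⊆ K)
    (hidem : ∀ e ∈ K, IsIdempotentElem e → e = 0) {e c : M} (he : e ∈ K) (hc : e * c = c) :
    c = 0 := by
  have hΓ : IsClosed (K ∩ {f | f * c = c}) :=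
    hK.inter (isClosed_eq (continuous_mul_const c) continuous_const)
  obtain ⟨f, ⟨hfK, hfc⟩, hff⟩ := exists_idempotent_in_compact_subsemigroup continuous_mul_const
    (K ∩ {f | f * c = c}) ⟨e, he, hc⟩ hΓ.isCompact fun a ha b hb =>
      ⟨hKK (mul_mem_mul ha.1 hb.1), show a * b * c = c by rw [mul_assoc, hb.2, ha.2]⟩
  rw [← hfc, hidem f hfK hff, zero_mul]

theorem IsClosed.subset_zero_of_subset_mul_self (hK : IsClosed K) (hKK : K * K ⊆ K)
    (hK2 : K ⊆ K * K) (hidem : ∀ e ∈ K, IsIdempotentElem e → e = 0) : K ⊆ {0} := by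
  intro x hx
  let r : M → M → Prop := fun y c => ∃ k ∈ K, k * c = y
  have : IsTrans M r := ⟨fun _ _ _ ⟨k, hk, hkb⟩ ⟨k', hk', hkc⟩ =>
    ⟨k * k', hKK (mul_mem_mul hk hk'), by rw [mul_assoc, hkc, hkb]⟩⟩
  have hr : IsClosed {p : M × M | r p.1 p.2} := by
    have : {p : M × M | r p.1 p.2} = (fun q : M × M => (q.1 * q.2, q.2)) '' (K ×ˢ univ) := by
      ext ⟨y, c⟩
      simp [r]
    rw [this]
    exact ((hK.isCompact.prod isCompact_univ).image (by fun_prop)).isClosed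
  obtain ⟨c, -, ⟨k, -, rfl⟩, ⟨e, he, hec⟩⟩ := hK.isCompact.exists_rel_self_of_forall_exists_rel hr
    (fun y hy => by
      obtain ⟨a, ha, b, hb, rfl⟩ := hK2 hy
      exact ⟨b, hb, a, ha, rfl⟩) hx
  rw [mem_singleton_iff, hK.eq_zero_of_mul_eq_self hKK hidem he hec, mul_zero]

end SemigroupWithZero

theorem Antitone.iInter_mul_self_subset {M : Type*} [Mul M] [TopologicalSpace M]
    [ContinuousMul M] [CompactSpace M] [T2Space M] {A : ℕ → Set M} (hA : Antitone A)
    (hAc : ∀ n, IsClosed (A n)) : ⋂ n, A n * A n ⊆ (⋂ n, A n) * (⋂ n, A n) := by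
  intro x hx
  choose a ha b hb hab using fun n => mem_iInter.1 hx n
  obtain ⟨p, -, hp⟩ := isCompact_univ.exists_mapClusterPt (f := atTop) (u := fun n => (a n, b n))
    (by simp)
  have hmem : ∀ m, p.1 ∈ A m ∧ p.2 ∈ A m := fun m =>
    ((hAc m).prod (hAc m)).mem_of_mapClusterPt hp
      ((eventually_ge_atTop m).mono fun n hn => ⟨hA hn (ha n), hA hn (hb n)⟩)
  refine ⟨p.1, mem_iInter.2 fun m => (hmem m).1, p.2, mem_iInter.2 fun m => (hmem m).2, ?_⟩
  show p.1 * p.2 = x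
  exact (isClosed_eq continuous_mul continuous_const).mem_of_mapClusterPt hp
    (Eventually.of_forall hab)

section Monoid

variable {M : Type*} [Monoid M] {S : Set M}

theorem Set.antitone_pow_succ (hS : S * S ⊆ S) : Antitone fun n => S ^ (n + 1) :=
  antitone_nat_of_succ_le fun n => by
    rw [pow_succ, pow_succ, mul_assoc]
    exact mul_subset_mul_left hS

theorem List.prod_mem_pow_length {l : List M} (hl : ∀ x ∈ l, x ∈ S) : l.prod ∈ S ^ l.length := by
  induction l with
  | nil => simp
  | cons a l ih =>
    rw [List.prod_cons, List.length_cons, pow_succ']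
    exact mul_mem_mul (hl a List.mem_cons_self) (ih fun x hx => hl x (List.mem_cons_of_mem a hx))

variable [TopologicalSpace M]

theorem Set.antitone_closure_pow_succ (hS : S * S ⊆ S) : Antitone fun n => closure (S ^ (n + 1)) :=
  fun _ _ h => closure_mono (antitone_pow_succ hS h)

def Set.iInterClosurePow (S : Set M) : Set M :=
  ⋂ n, closure (S ^ (n + 1))

theorem Set.isClosed_iInterClosurePow : IsClosed S.iInterClosurePow :=
  isClosed_iInter fun _ => isClosed_closure

variable [ContinuousMul M]

theorem Set.iInterClosurePow_mul_subset (hS : S * S ⊆ S) :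
    S.iInterClosurePow * S.iInterClosurePow ⊆ S.iInterClosurePow := by
  rintro _ ⟨x, hx, y, hy, rfl⟩
  refine mem_iInter.2 fun n => closure_mono (antitone_pow_succ hS n.le_succ) ?_
  refine map_mem_closure₂ continuous_mul (mem_iInter.1 hx 0) (mem_iInter.1 hy n) fun a ha b hb => ?_
  show a * b ∈ S ^ (n + 1 + 1)
  rw [pow_succ' S (n + 1)]
  exact mul_mem_mul (by simpa using ha) hb

theorem Set.iInterClosurePow_subset_mul_self [CompactSpace M] [T2Space M] (hS : S * S ⊆ S) :
    S.iInterClosurePow ⊆ S.iInterClosurePow * S.iInterClosurePow := by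
  refine Subset.trans ?_ ((antitone_closure_pow_succ hS).iInter_mul_self_subset
    fun _ => isClosed_closure)
  refine iInter_mono' fun n => ⟨n + n + 1, ?_⟩
  have hclosed : IsClosed (closure (S ^ (n + 1)) * closure (S ^ (n + 1))) :=
    (isClosed_closure.isCompact.mul isClosed_closure.isCompact).isClosed
  refine closure_minimal ?_ hclosed
  rw [show n + n + 1 + 1 = (n + 1) + (n + 1) by ring, pow_add]
  exact mul_subset_mul subset_closure subset_closure

end Monoid

theorem Set.eventually_pow_subset_of_mem_nhds_zero {M : Type*} [MonoidWithZero M]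
    [TopologicalSpace M] [ContinuousMul M] [CompactSpace M] [T2Space M] {S : Set M}
    (hS : S * S ⊆ S) (hidem : ∀ e ∈ closure S, IsIdempotentElem e → e = 0) {U : Set M}
    (hU : U ∈ 𝓝 0) : ∀ᶠ n in atTop, S ^ n ⊆ U := by
  have hK : S.iInterClosurePow ⊆ {0} :=
    isClosed_iInterClosurePow.subset_zero_of_subset_mul_self (iInterClosurePow_mul_subset hS)
      (iInterClosurePow_subset_mul_self hS) fun e he => hidem e (by simpa using mem_iInter.1 he 0)
  obtain ⟨N, hN⟩ := exists_subset_nhds_of_isCompact (antitone_closure_pow_succ hS).directed_ge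
    (fun _ => isClosed_closure.isCompact) fun x hx => by rwa [hK hx]
  filter_upwards [eventually_gt_atTop N] with n hn
  obtain ⟨m, rfl⟩ : ∃ m, n = m + 1 := ⟨n - 1, by omega⟩
  exact (antitone_pow_succ hS (by omega : N ≤ m)).trans (subset_closure.trans hN)

theorem isClosed_setOf_exists_mul_eq_one {M : Type*} [MulOneClass M] [TopologicalSpace M]
    [ContinuousMul M] [CompactSpace M] [T2Space M] : IsClosed {x : M | ∃ y, y * x = 1} := by
  have : {x : M | ∃ y, y * x = 1} = Prod.snd '' {p : M × M | p.1 * p.2 = 1} := by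
    ext
    simp
  rw [this]
  exact ((isClosed_eq continuous_mul continuous_const).isCompact.image continuous_snd).isClosed

theorem Ideal.exists_mul_one_sub_eq_one_of_mem_jacobson_bot {R : Type*} [Ring R] {x : R}
    (hx : x ∈ Ideal.jacobson (⊥ : Ideal R)) : ∃ y, y * (1 - x) = 1 := by
  obtain ⟨z, hz⟩ := Ideal.mem_jacobson_iff.1 hx (-1)
  rw [Submodule.mem_bot, mul_neg_one, neg_mul, sub_eq_zero] at hz
  exact ⟨z, by rw [mul_sub, mul_one, ← hz]; abel⟩

theorem IsIdempotentElem.eq_zero_of_mem_closure_jacobson_bot {R : Type*} [Ring R]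
    [TopologicalSpace R] [IsTopologicalRing R] [CompactSpace R] [T2Space R] {e : R}
    (he : IsIdempotentElem e) (hJ : e ∈ closure (Ideal.jacobson (⊥ : Ideal R) : Set R)) :
    e = 0 := by
  have hleft : closure (Ideal.jacobson (⊥ : Ideal R) : Set R) ⊆ {x | ∃ y, y * (1 - x) = 1} :=
    closure_minimal (fun _ => Ideal.exists_mul_one_sub_eq_one_of_mem_jacobson_bot)
      (isClosed_setOf_exists_mul_eq_one.preimage (continuous_const.sub continuous_id))
  obtain ⟨y, hy⟩ := hleft hJ
  calc e = y * (1 - e) * e := by rw [hy, one_mul]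
    _ = 0 := by rw [mul_assoc, sub_mul, one_mul, he.eq, sub_self, mul_zero]

/-- In a compact Hausdorff topological ring the Jacobson radical is topologically
nilpotent: for every neighborhood `U` of `0` there is `n ≥ 1` such that every product of
`n` elements of the Jacobson radical lies in `U`. -/
theorem jacobson_topologically_nilpotent (R : Type*) [Ring R] [TopologicalSpace R]
    [IsTopologicalRing R] [CompactSpace R] [T2Space R] :
    ∀ U ∈ nhds (0 : R), ∃ n : ℕ, 1 ≤ n ∧
      ∀ l : List R, l.length = n → (∀ x ∈ l, x ∈ Ideal.jacobson (⊥ : Ideal R)) →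
        l.prod ∈ U := by
  intro U hU
  set J : Set R := (Ideal.jacobson (⊥ : Ideal R) : Set R)
  have hJJ : J * J ⊆ J := Set.mul_subset_iff.2 fun a _ _ hb => Ideal.mul_mem_left _ a hb
  obtain ⟨n, hn, hn1⟩ := ((eventually_pow_subset_of_mem_nhds_zero hJJ
    (fun _ hJ he => he.eq_zero_of_mem_closure_jacobson_bot hJ) hU).and
    (eventually_ge_atTop 1)).exists
  exact ⟨n, hn1, fun l hl hmem => hn (hl ▸ List.prod_mem_pow_length hmem)⟩
end
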